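/- arXiv:2507.02421 — 2 statements merged into one kernel-verified Lean document; each statement's English description precedes it below -/
import Mathlib

section
/- Let n ≥ 2 and let P_n be the path graph with vertices v_1, …, v_n. Then the adjacency matrix A_{(P_n, {v_1, v_n})} of the graft whose mark set consists of the two leaves has rank n − 1 over GF(2); equivalently, its corank equals 1. -/
open scoped Classical symmDiff

/-- Local complementation of a simple graph at a vertex `v`: toggle the adjacency
between every pair of distinct neighbours of `v`. -/
def SimpleGraph.localComp {V : Type*} (G : SimpleGraph V) (v : V) : SimpleGraph V where
  Adj u w := u ≠ w ∧ (Xor' (G.Adj u w) (G.Adj v u ∧ G.Adj v w))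
  symm := by
    constructor
    rintro u w ⟨h1, h2⟩
    refine ⟨h1.symm, ?_⟩
    rw [G.adj_comm w u, and_comm]
    exact h2
  loopless := ⟨fun u h => h.1 rfl⟩

/-- Local complementation deletion `G ⊟ v`, keeping the ambient vertex type
(the deleted vertex becomes isolated). -/
def SimpleGraph.lcdel {V : Type*} (G : SimpleGraph V) (v : V) : SimpleGraph V where
  Adj u w := u ≠ v ∧ w ≠ v ∧ (G.localComp v).Adj u w
  symm := ⟨fun u w h => ⟨h.2.1, h.1, (G.localComp v).adj_symm h.2.2⟩⟩
  loopless := ⟨fun u h => (G.localComp v).irrefl h.2.2⟩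

/-- A graft: a simple graph whose edges lie inside a finite support, together with
a marked set of vertices `L ⊆ support`. -/
structure Graft (V : Type*) where
  support : Finset V
  G : SimpleGraph V
  edge_mem : ∀ ⦃u w : V⦄, G.Adj u w → u ∈ support
  L : Finset V
  L_sub : L ⊆ support

variable {V : Type*} [Fintype V] [DecidableEq V]

/-- Local complementation deletion of a graft at a vertex:
`(G, L) ⊟ v = (G ⊟ v, (L \ {v}) ∆ N_G(v))`. -/
noncomputable def Graft.lcd (Γ : Graft V) (v : V) : Graft V where
  support := Γ.support.erase v
  G := Γ.G.lcdel v
  edge_mem := by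
    intro u w h
    change u ≠ v ∧ w ≠ v ∧ u ≠ w ∧ Xor' (Γ.G.Adj u w) (Γ.G.Adj v u ∧ Γ.G.Adj v w) at h
    obtain ⟨hu, hw, hne, hx⟩ := h
    refine Finset.mem_erase.mpr ⟨hu, ?_⟩
    rcases (hx : (Γ.G.Adj u w ∧ ¬(Γ.G.Adj v u ∧ Γ.G.Adj v w)) ∨
        ((Γ.G.Adj v u ∧ Γ.G.Adj v w) ∧ ¬Γ.G.Adj u w)) with ⟨ha, -⟩ | ⟨⟨hv1, -⟩, -⟩
    · exact Γ.edge_mem ha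
    · exact Γ.edge_mem (Γ.G.adj_symm hv1)
  L := (Γ.L.erase v) ∆ (Finset.univ.filter fun u => Γ.G.Adj v u)
  L_sub := by
    intro u hu
    rw [Finset.mem_symmDiff] at hu
    refine Finset.mem_erase.mpr ?_
    rcases hu with ⟨h1, -⟩ | ⟨h2, -⟩
    · exact ⟨(Finset.mem_erase.mp h1).1, Γ.L_sub (Finset.mem_erase.mp h1).2⟩
    · have hadj : Γ.G.Adj v u := (Finset.mem_filter.mp h2).2
      exact ⟨fun h => Γ.G.irrefl (h ▸ hadj), Γ.edge_mem (Γ.G.adj_symm hadj)⟩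

/-- `Δ` is a local complementation minor of `Γ`: it is obtained from `Γ` by a
finite sequence of local complementation deletions, each performed at a vertex
of the current mark set. -/
inductive Graft.IsLCMinor : Graft V → Graft V → Prop
  | refl (Γ : Graft V) : Graft.IsLCMinor Γ Γ
  | step {Γ Δ : Graft V} (v : V) (hv : v ∈ Γ.L) :
      Graft.IsLCMinor (Γ.lcd v) Δ → Graft.IsLCMinor Γ Δ

/-- The adjacency matrix over GF(2) of a graft, indexed by its support. -/
noncomputable def Graft.matrix (Γ : Graft V) :
    Matrix Γ.support Γ.support (ZMod 2) := fun u w =>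
  if (u : V) = (w : V) then (if (u : V) ∈ Γ.L then 1 else 0)
  else (if Γ.G.Adj (u : V) (w : V) then 1 else 0)

/-- The corank over GF(2) of the adjacency matrix of a graft. -/
noncomputable def Graft.corank (Γ : Graft V) : ℕ :=
  Γ.support.card - Γ.matrix.rank

/-- The graft on the path graph `P_n` (full support) with mark set `L`. -/
noncomputable def pathGraft (n : ℕ) (L : Finset (Fin n)) : Graft (Fin n) :=
  ⟨Finset.univ, SimpleGraph.pathGraph n, fun u _ _ => Finset.mem_univ u, L,
    Finset.subset_univ L⟩

/-!
Over GF(2), row `k` of the adjacency matrix of `(P_n, {v₁, vₙ})` is `e_{k-1} + e_{k+1}`, where an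
end vertex, being marked, stands in for its missing neighbour. So `A x = 0` says `x_{k-1} = x_{k+1}`,
which together with the end row `x₀ = x₁` forces `x` to be constant: the kernel is spanned by the
all-ones vector and the rank is `n - 1`.
-/

theorem Matrix.rank_eq_card_sub_one_of_ker_eq_span {K m n : Type*} [Field K] [Fintype n]
    {A : Matrix m n K} {v : n → K} (hv : v ≠ 0) (hker : LinearMap.ker A.mulVecLin = K ∙ v) :
    A.rank = Fintype.card n - 1 := by
  have h := LinearMap.finrank_range_add_finrank_ker A.mulVecLin
  rw [hker, finrank_span_singleton hv, Module.finrank_fintype_fun_eq_card] at h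
  rw [Matrix.rank]
  omega

noncomputable def pathGraftMatrix (n : ℕ) (L : Finset (Fin n)) : Matrix (Fin n) (Fin n) (ZMod 2) :=
  fun i j => if i = j then (if i ∈ L then 1 else 0)
    else if (SimpleGraph.pathGraph n).Adj i j then 1 else 0

theorem pathGraft_matrix_rank (n : ℕ) (L : Finset (Fin n)) :
    (pathGraft n L).matrix.rank = (pathGraftMatrix n L).rank := by
  let e : (pathGraft n L).support ≃ Fin n := Equiv.subtypeUnivEquiv Finset.mem_univ
  exact Matrix.rank_submatrix (pathGraftMatrix n L) e e

-- The two neighbours of `k` in `P_n`, an end vertex standing in for its missing neighbour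
-- (`k - 1` is truncated subtraction).
def Fin.clampPred {n : ℕ} (k : Fin n) : Fin n := ⟨k - 1, by omega⟩

def Fin.clampSucc {n : ℕ} (k : Fin n) : Fin n := ⟨min (k + 1) (n - 1), by omega⟩

theorem Fin.eq_of_forall_clampPred_eq_clampSucc {α : Type*} {n : ℕ} {x : Fin n → α}
    (h : ∀ i : Fin n, x i.clampPred = x i.clampSucc) (i j : Fin n) : x i = x j := by
  have step : ∀ k (hk : k + 1 < n), x ⟨k, by omega⟩ = x ⟨k + 1, hk⟩ := by
    intro k
    induction k with
    | zero =>
      intro hk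
      simpa [Fin.clampPred, Fin.clampSucc, show 1 ≤ n - 1 by omega] using h ⟨0, by omega⟩
    | succ k ih =>
      intro hk
      have hrow := h ⟨k + 1, by omega⟩
      simp only [Fin.clampPred, Fin.clampSucc, Nat.add_sub_cancel,
        min_eq_left (show k + 1 + 1 ≤ n - 1 by omega)] at hrow
      rw [← hrow, ih (by omega)]
  have eq_zero : ∀ k (hk : k < n), x ⟨k, hk⟩ = x ⟨0, by omega⟩ := by
    intro k
    induction k with
    | zero => intro; rfl
    | succ k ih => intro hk; rw [← step k hk, ih]
  rw [eq_zero i i.isLt, eq_zero j j.isLt]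

section Leaves

variable {n : ℕ} (hn : 2 ≤ n)

def pathLeaves : Finset (Fin n) :=
  {⟨0, Nat.zero_lt_of_lt hn⟩, ⟨n - 1, Nat.sub_one_lt_of_lt hn⟩}

theorem pathGraftMatrix_pathLeaves_apply (i j : Fin n) :
    pathGraftMatrix n (pathLeaves hn) i j =
      (if j = i.clampPred then 1 else 0) + (if j = i.clampSucc then 1 else 0) := by
  simp only [pathGraftMatrix, pathLeaves, Fin.clampPred, Fin.clampSucc, SimpleGraph.pathGraph_adj,
    Finset.mem_insert, Finset.mem_singleton, Fin.ext_iff]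
  split_ifs <;> first | omega | decide

theorem pathGraftMatrix_pathLeaves_mulVec (x : Fin n → ZMod 2) (i : Fin n) :
    (pathGraftMatrix n (pathLeaves hn)).mulVec x i = x i.clampPred + x i.clampSucc := by
  simp only [Matrix.mulVec, dotProduct, pathGraftMatrix_pathLeaves_apply, add_mul, ite_mul, one_mul,
    zero_mul, Finset.sum_add_distrib, Finset.sum_ite_eq', Finset.mem_univ, if_true]

theorem ker_pathGraftMatrix_pathLeaves :
    LinearMap.ker (pathGraftMatrix n (pathLeaves hn)).mulVecLin = ZMod 2 ∙ 1 := by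
  ext x
  rw [LinearMap.mem_ker, Matrix.mulVecLin_apply, Submodule.mem_span_singleton, funext_iff]
  simp only [pathGraftMatrix_pathLeaves_mulVec, Pi.zero_apply, CharTwo.add_eq_zero]
  constructor
  · intro h
    refine ⟨x ⟨0, by omega⟩, funext fun i => ?_⟩
    rw [Pi.smul_apply, Pi.one_apply, smul_eq_mul, mul_one]
    exact Fin.eq_of_forall_clampPred_eq_clampSucc h _ i
  · rintro ⟨a, rfl⟩ i
    rfl

theorem rank_pathGraftMatrix_pathLeaves : (pathGraftMatrix n (pathLeaves hn)).rank = n - 1 := by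
  have hone : (1 : Fin n → ZMod 2) ≠ 0 := fun h => one_ne_zero (congrFun h ⟨0, by omega⟩)
  rw [Matrix.rank_eq_card_sub_one_of_ker_eq_span hone (ker_pathGraftMatrix_pathLeaves hn),
    Fintype.card_fin]

end Leaves

/-- For `n ≥ 2`, the adjacency matrix over GF(2) of the graft on the path `P_n`
whose mark set consists of the two leaves `v₁ = 0` and `vₙ = n-1` has rank
`n - 1`; equivalently, its corank equals `1`. -/
theorem path_graft_leaves_matrix_rank (n : ℕ) (hn : 2 ≤ n) :
    let Γ : Graft (Fin n) := pathGraft n {⟨0, by omega⟩, ⟨n - 1, by omega⟩}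
    Γ.matrix.rank = n - 1 ∧ Γ.corank = 1 := by
  intro Γ
  have hrank : Γ.matrix.rank = n - 1 :=
    (pathGraft_matrix_rank n _).trans (rank_pathGraftMatrix_pathLeaves hn)
  have hcard : Γ.support.card = n := Finset.card_fin n
  refine ⟨hrank, ?_⟩
  rw [Graft.corank, hrank, hcard]
  omega
end

section
/- Let G be a simple graph on n ≥ 4 vertices with a vertex v adjacent to every other vertex of G, and suppose the local complementation deletion G ⊟ v is a path. Then there exists a vertex u ≠ v of G, namely any vertex of degree 2 in the path G ⊟ v, such that the local complementation deletion G ⊟ u contains three pairwise adjacent vertices (a triangle); in particular, G ⊟ u is not a path. -/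
open scoped Classical

/-- Local complementation deletion `G ⊟ v := (G * v) \ v`: perform local
complementation at `v` and then delete the vertex `v`. -/
def SimpleGraph.lcdSub {V : Type*} (G : SimpleGraph V) (v : V) :
    SimpleGraph {u : V // u ≠ v} :=
  SimpleGraph.induce {u : V | u ≠ v} (G.localComp v)

/-- `G ⊟ u` contains three pairwise adjacent vertices (a triangle) and, in
particular, is not a path. -/
def LcdSubHasTriangleNotPath {V : Type*} (G : SimpleGraph V) (u : V) : Prop :=
  (∃ a b c : {w : V // w ≠ u}, a ≠ b ∧ a ≠ c ∧ b ≠ c ∧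
    (G.lcdSub u).Adj a b ∧ (G.lcdSub u).Adj a c ∧ (G.lcdSub u).Adj b c) ∧
  ¬ ∃ n, Nonempty (G.lcdSub u ≃g SimpleGraph.pathGraph n)

/-!
Since `v` is adjacent to every other vertex, `G ⊟ v` is the complement of `G - v`. A vertex `u`
of degree 2 in the path `G ⊟ v` has two neighbours `x`, `y` there which are not adjacent to each
other, as a path has no triangle. So in `G` the vertex `u` is adjacent to neither `x` nor `y`,
while `x y` is an edge. Local complementation at `u` then changes no pair among `v, x, y`, which
therefore form a triangle in `G ⊟ u`.
-/

namespace SimpleGraph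

variable {V : Type*} {G : SimpleGraph V} {u v a b x y : V}

theorem lcdSub_adj {a b : {w : V // w ≠ v}} :
    (G.lcdSub v).Adj a b ↔ (G.localComp v).Adj a.1 b.1 :=
  Iff.rfl

theorem localComp_adj :
    (G.localComp v).Adj a b ↔ a ≠ b ∧ Xor (G.Adj a b) (G.Adj v a ∧ G.Adj v b) :=
  Iff.rfl

theorem localComp_adj_of_adj_of_adj (ha : G.Adj v a) (hb : G.Adj v b) :
    (G.localComp v).Adj a b ↔ a ≠ b ∧ ¬G.Adj a b := by
  rw [localComp_adj, eq_true ha, eq_true hb, and_self, xor_comm, xor_true]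

theorem localComp_adj_of_not_adj_left (ha : ¬G.Adj v a) :
    (G.localComp v).Adj a b ↔ G.Adj a b := by
  rw [localComp_adj, eq_false ha, false_and, xor_comm, xor_false, id, and_iff_right_iff_imp]
  exact Adj.ne

theorem localComp_adj_of_not_adj_right (hb : ¬G.Adj v b) :
    (G.localComp v).Adj a b ↔ G.Adj a b := by
  rw [adj_comm, localComp_adj_of_not_adj_left hb, adj_comm]

theorem localComp_adj_triangle (hvu : G.Adj v u) (hvx : G.Adj v x) (hvy : G.Adj v y)
    (hux : (G.localComp v).Adj u x) (huy : (G.localComp v).Adj u y) (hxy : x ≠ y)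
    (hnxy : ¬(G.localComp v).Adj x y) :
    (G.localComp u).Adj v x ∧ (G.localComp u).Adj v y ∧ (G.localComp u).Adj x y := by
  have hGux : ¬G.Adj u x := ((localComp_adj_of_adj_of_adj hvu hvx).1 hux).2
  have hGuy : ¬G.Adj u y := ((localComp_adj_of_adj_of_adj hvu hvy).1 huy).2
  have hGxy : G.Adj x y := by
    by_contra h
    exact hnxy ((localComp_adj_of_adj_of_adj hvx hvy).2 ⟨hxy, h⟩)
  exact ⟨(localComp_adj_of_not_adj_right hGux).2 hvx,
    (localComp_adj_of_not_adj_right hGuy).2 hvy, (localComp_adj_of_not_adj_left hGux).2 hGxy⟩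

theorem cliqueFree_three_of_iso_pathGraph {W : Type*} {H : SimpleGraph W} {n : ℕ}
    (f : H ≃g pathGraph n) : H.CliqueFree 3 :=
  (Coloring.colorable ((pathGraph.bicoloring n).comp f.toHom)).cliqueFree (by simp)

theorem pathGraph_degree_one {n : ℕ} (hn : 3 ≤ n) : (pathGraph n).degree ⟨1, by omega⟩ = 2 := by
  rw [← card_neighborFinset_eq_degree, Finset.card_eq_two]
  refine ⟨⟨0, by omega⟩, ⟨2, by omega⟩, by simp, ?_⟩
  ext w
  simp only [mem_neighborFinset, pathGraph_adj, Finset.mem_insert, Finset.mem_singleton,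
    Fin.ext_iff]
  omega

theorem exists_degree_eq_two_of_iso_pathGraph {W : Type*} [Fintype W] {H : SimpleGraph W}
    [∀ w, Fintype (H.neighborSet w)] {n : ℕ} (f : H ≃g pathGraph n)
    (hW : 3 ≤ Fintype.card W) : ∃ w, H.degree w = 2 := by
  have hn : 3 ≤ n := by simpa [Fintype.card_congr f.toEquiv] using hW
  refine ⟨f.symm ⟨1, by omega⟩, ?_⟩
  rw [← f.degree_eq, f.apply_symm_apply]
  convert pathGraph_degree_one hn

theorem exists_adj_adj_not_adj_of_degree_eq_two {W : Type*} {H : SimpleGraph W}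
    (hH : H.CliqueFree 3) {w : W} [Fintype (H.neighborSet w)] (hw : H.degree w = 2) :
    ∃ x y, x ≠ y ∧ H.Adj w x ∧ H.Adj w y ∧ ¬H.Adj x y := by
  rw [← card_neighborFinset_eq_degree, Finset.card_eq_two] at hw
  obtain ⟨x, y, hxy, hxy'⟩ := hw
  have hx : H.Adj w x := by simp [← mem_neighborFinset, hxy']
  have hy : H.Adj w y := by simp [← mem_neighborFinset, hxy']
  exact ⟨x, y, hxy, hx, hy, fun h => hH _ (is3Clique_triple_iff.2 ⟨hx, hy, h⟩)⟩

end SimpleGraph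

open SimpleGraph

theorem lcdSubHasTriangleNotPath_of_localComp_adj {V : Type*} {G : SimpleGraph V} {u a b c : V}
    (ha : a ≠ u) (hb : b ≠ u) (hc : c ≠ u) (hab : (G.localComp u).Adj a b)
    (hac : (G.localComp u).Adj a c) (hbc : (G.localComp u).Adj b c) :
    LcdSubHasTriangleNotPath G u := by
  have hab' : (G.lcdSub u).Adj ⟨a, ha⟩ ⟨b, hb⟩ := hab
  have hac' : (G.lcdSub u).Adj ⟨a, ha⟩ ⟨c, hc⟩ := hac
  have hbc' : (G.lcdSub u).Adj ⟨b, hb⟩ ⟨c, hc⟩ := hbc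
  refine ⟨⟨_, _, _, hab'.ne, hac'.ne, hbc'.ne, hab', hac', hbc'⟩, ?_⟩
  rintro ⟨n, ⟨f⟩⟩
  exact cliqueFree_three_of_iso_pathGraph f _ (is3Clique_triple_iff.2 ⟨hab', hac', hbc'⟩)

/-- Case 2.1 of Theorem 3.3: let `G` be a simple graph on `n ≥ 4` vertices with a
vertex `v` adjacent to every other vertex, and suppose `G ⊟ v` is a path.  Then
there is a vertex `u ≠ v` — namely, any vertex of degree `2` in the path
`G ⊟ v` — such that `G ⊟ u` contains a triangle; in particular `G ⊟ u` is not a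
path. -/
theorem dominating_lcdSub_path_triangle {V : Type*} [Fintype V] [DecidableEq V]
    (G : SimpleGraph V) (hcard : 4 ≤ Fintype.card V)
    (v : V) (hdom : ∀ u, u ≠ v → G.Adj v u)
    (hpath : ∃ n, Nonempty (G.lcdSub v ≃g SimpleGraph.pathGraph n)) :
    (∃ u : V, u ≠ v ∧ LcdSubHasTriangleNotPath G u) ∧
    (∀ u : {w : V // w ≠ v}, (G.lcdSub v).degree u = 2 →
      LcdSubHasTriangleNotPath G u.1) := by
  obtain ⟨n, ⟨f⟩⟩ := hpath
  have triangle_of_degree_two : ∀ u : {w : V // w ≠ v}, (G.lcdSub v).degree u = 2 →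
      LcdSubHasTriangleNotPath G u.1 := by
    intro u hu
    obtain ⟨x, y, hxy, hux, huy, hnxy⟩ :=
      exists_adj_adj_not_adj_of_degree_eq_two (cliqueFree_three_of_iso_pathGraph f) hu
    obtain ⟨hvx, hvy, hGxy⟩ := localComp_adj_triangle (hdom u u.2) (hdom x x.2) (hdom y y.2)
      hux huy (Subtype.coe_ne_coe.2 hxy) hnxy
    exact lcdSubHasTriangleNotPath_of_localComp_adj (Ne.symm u.2) (lcdSub_adj.1 hux).ne.symm
      (lcdSub_adj.1 huy).ne.symm hvx hvy hGxy
  obtain ⟨u, hu⟩ := exists_degree_eq_two_of_iso_pathGraph f (by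
    simp only [ne_eq, Fintype.card_subtype_compl, Fintype.card_unique]; omega)
  exact ⟨⟨u, u.2, triangle_of_degree_two u hu⟩, triangle_of_degree_two⟩
end
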